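/- arXiv:math/0401401 — 9 statements merged into one kernel-verified Lean document; each statement's English description precedes it below -/
import Mathlib

section
/- For a nonzero ideal I in the formal power series ring K[[x_1,...,x_n]] over a field K of characteristic zero, and for any 0 ≤ i ≤ μ−1, the set {x : ord_x(I) ≥ μ} coincides with {x : ord_x(D^i(I)) ≥ μ−i}, where D(I) is the ideal generated by I together with all first partial derivatives of its elements, and D^i is the i-th iterate. -/
/-- Coefficientwise partial derivative `∂/∂x_i` of a formal power series. -/
noncomputable def psD {K : Type*} [CommRing K] {σ : Type*} (i : σ)
    (f : MvPowerSeries σ K) : MvPowerSeries σ K :=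
  fun e => ((e i + 1 : ℕ) : K) * f (e + Finsupp.single i 1)

/-- The first derivative ideal: generated by `I` and all first partial derivatives of
elements of `I`. -/
noncomputable def psDerivIdeal {K : Type*} [CommRing K] {σ : Type*}
    (I : Ideal (MvPowerSeries σ K)) : Ideal (MvPowerSeries σ K) :=
  I ⊔ Ideal.span {g | ∃ f ∈ I, ∃ i : σ, g = psD i f}

/-- The `k`-th iterated derivative ideal. -/
noncomputable def psDerivIter {K : Type*} [CommRing K] {σ : Type*} (k : ℕ)
    (I : Ideal (MvPowerSeries σ K)) : Ideal (MvPowerSeries σ K) :=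
  psDerivIdeal^[k] I

/-- `ord(f) ≥ μ` at the (closed) point: every nonzero coefficient has total degree
at least `μ`, i.e. `f ∈ m^μ`. -/
def psOrdGE {K : Type*} [CommRing K] {σ : Type*} (f : MvPowerSeries σ K) (μ : ℕ) : Prop :=
  ∀ e : σ →₀ ℕ, f e ≠ 0 → μ ≤ e.sum fun _ v => v

/-! Differentiation lowers the order of a series by at most one, so `D` maps the series of
order `≥ ν` to series of order `≥ ν - 1`, and by induction `ord I ≥ μ` gives `ord Dⁱ(I) ≥ μ - i`.
Conversely, if `f ∈ I` has a nonzero coefficient at `xᵉ` with `|e| < μ`, differentiating along a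
variable `x_j` occurring in `xᵉ` keeps that term, multiplied by `e j`, which is nonzero in
characteristic zero. After `i` steps this gives an element of `Dⁱ(I)` with a nonzero coefficient
in degree `|e| - i`, and `|e| - i < μ - i` because `i < μ`. -/

open MvPowerSeries

section
variable {σ K : Type*} [CommRing K]

theorem psOrdGE_iff_le_order {f : MvPowerSeries σ K} {ν : ℕ} :
    psOrdGE f ν ↔ (ν : ℕ∞) ≤ f.order := by
  refine ⟨fun h => le_order fun d hd => ?_, fun h e he => ?_⟩
  · by_contra hne
    exact absurd (h d hne) (by exact_mod_cast hd.not_ge)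
  · exact_mod_cast h.trans (order_le he)

theorem psOrdGE.mono {f : MvPowerSeries σ K} {ν ν' : ℕ} (hf : psOrdGE f ν) (h : ν' ≤ ν) :
    psOrdGE f ν' :=
  fun e he => h.trans (hf e he)

variable (σ K) in
noncomputable def ordGEIdeal (ν : ℕ) : Ideal (MvPowerSeries σ K) where
  carrier := {f | psOrdGE f ν}
  zero_mem' := by simp [psOrdGE_iff_le_order]
  add_mem' {f g} hf hg := by
    simp only [Set.mem_ofPred_eq, psOrdGE_iff_le_order] at *
    exact (le_min hf hg).trans min_order_le_add
  smul_mem' r f hf := by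
    simp only [Set.mem_ofPred_eq, psOrdGE_iff_le_order, smul_eq_mul] at *
    exact (hf.trans le_add_self).trans le_order_mul

theorem psOrdGE.psD {f : MvPowerSeries σ K} {ν : ℕ} (hf : psOrdGE f ν) (j : σ) :
    psOrdGE (psD j f) (ν - 1) := by
  intro e he
  have hdeg : ν ≤ Finsupp.degree (e + Finsupp.single j 1) := hf _ (right_ne_zero_of_mul he)
  rw [map_add, Finsupp.degree_single] at hdeg
  change ν - 1 ≤ Finsupp.degree e
  omega

theorem psDerivIter_succ (k : ℕ) (I : Ideal (MvPowerSeries σ K)) :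
    psDerivIter (k + 1) I = psDerivIdeal (psDerivIter k I) :=
  Function.iterate_succ_apply' _ _ _

theorem psDerivIdeal_le_ordGEIdeal {I : Ideal (MvPowerSeries σ K)} {ν : ℕ}
    (h : I ≤ ordGEIdeal σ K ν) : psDerivIdeal I ≤ ordGEIdeal σ K (ν - 1) := by
  refine sup_le (fun f hf => (h hf).mono (Nat.sub_le ν 1)) ?_
  rw [Ideal.span_le]
  rintro _ ⟨f, hf, j, rfl⟩
  exact (h hf).psD j

theorem psDerivIter_le_ordGEIdeal {I : Ideal (MvPowerSeries σ K)} {ν : ℕ}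
    (h : I ≤ ordGEIdeal σ K ν) (k : ℕ) : psDerivIter k I ≤ ordGEIdeal σ K (ν - k) := by
  induction k with
  | zero => exact h
  | succ k ih =>
    rw [psDerivIter_succ, Nat.sub_succ]
    exact psDerivIdeal_le_ordGEIdeal ih

theorem single_one_le_of_apply_ne_zero {e : σ →₀ ℕ} {j : σ} (hj : e j ≠ 0) :
    Finsupp.single j 1 ≤ e :=
  Finsupp.single_le_iff.mpr (Nat.one_le_iff_ne_zero.mpr hj)

theorem psD_apply_sub_single {f : MvPowerSeries σ K} {e : σ →₀ ℕ} {j : σ} (hj : e j ≠ 0) :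
    psD j f (e - Finsupp.single j 1) = (e j : K) * f e := by
  have hj' : (e - Finsupp.single j 1 : σ →₀ ℕ) j + 1 = e j := by
    rw [Finsupp.tsub_apply, Finsupp.single_eq_same]
    omega
  simp only [psD, hj', tsub_add_cancel_of_le (single_one_le_of_apply_ne_zero hj)]

theorem exists_coeff_ne_zero_psDerivIdeal [NoZeroDivisors K] [CharZero K]
    {I : Ideal (MvPowerSeries σ K)} {f : MvPowerSeries σ K} (hf : f ∈ I) {e : σ →₀ ℕ}
    (he : f e ≠ 0) :
    ∃ g ∈ psDerivIdeal I, ∃ e' : σ →₀ ℕ, g e' ≠ 0 ∧ e'.degree = e.degree - 1 := by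
  by_cases h0 : e = 0
  · exact ⟨f, Ideal.mem_sup_left hf, e, he, by simp [h0]⟩
  obtain ⟨j, hj⟩ : ∃ j, e j ≠ 0 := Finsupp.ne_iff.mp h0
  refine ⟨psD j f, Ideal.mem_sup_right (Ideal.subset_span ⟨f, hf, j, rfl⟩),
    e - Finsupp.single j 1, ?_, ?_⟩
  · rw [psD_apply_sub_single hj]
    exact mul_ne_zero (Nat.cast_ne_zero.mpr hj) he
  · have hdeg :=
      congrArg Finsupp.degree (tsub_add_cancel_of_le (single_one_le_of_apply_ne_zero hj))
    rw [map_add, Finsupp.degree_single] at hdeg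
    omega

theorem exists_coeff_ne_zero_psDerivIter [NoZeroDivisors K] [CharZero K]
    {I : Ideal (MvPowerSeries σ K)} {f : MvPowerSeries σ K} (hf : f ∈ I) {e : σ →₀ ℕ}
    (he : f e ≠ 0) (k : ℕ) :
    ∃ g ∈ psDerivIter k I, ∃ e' : σ →₀ ℕ, g e' ≠ 0 ∧ e'.degree = e.degree - k := by
  induction k with
  | zero => exact ⟨f, hf, e, he, rfl⟩
  | succ k ih =>
    obtain ⟨g, hg, e', hg', hdeg⟩ := ih
    obtain ⟨g₁, hg₁, e₁, hg₁', hdeg₁⟩ := exists_coeff_ne_zero_psDerivIdeal hg hg'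
    exact ⟨g₁, psDerivIter_succ k I ▸ hg₁, e₁, hg₁', by omega⟩

end

theorem stmt_1_general {K : Type*} [Field K] [CharZero K] {n : ℕ}
    (I : Ideal (MvPowerSeries (Fin n) K)) (μ i : ℕ) (hi : i < μ) :
    (∀ f ∈ I, psOrdGE f μ) ↔ ∀ g ∈ psDerivIter i I, psOrdGE g (μ - i) := by
  refine ⟨fun h g hg => psDerivIter_le_ordGEIdeal h i hg, fun h f hf e he => ?_⟩
  obtain ⟨g, hg, e', hg', hdeg⟩ := exists_coeff_ne_zero_psDerivIter hf he i
  have hlow : μ - i ≤ e'.degree := h g hg e' hg'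
  change μ ≤ e.degree
  omega

/-- Giraud–Villamayor: for a nonzero ideal `I` of `K[[x_1,...,x_n]]` with `char K = 0`
and `0 ≤ i ≤ μ−1`, the locus `{ord(I) ≥ μ}` coincides with `{ord(D^i(I)) ≥ μ−i}`. -/
theorem stmt_1 {K : Type*} [Field K] [CharZero K] {n : ℕ}
    (I : Ideal (MvPowerSeries (Fin n) K)) (hI : I ≠ ⊥) (μ i : ℕ) (hi : i < μ) :
    (∀ f ∈ I, psOrdGE f μ) ↔ ∀ g ∈ psDerivIter i I, psOrdGE g (μ - i) :=
  stmt_1_general I μ i hi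
end

section
/- Let I be an ideal of the polynomial ring K[x_1,...,x_n] over a field K of characteristic zero, and let D(I) denote the ideal generated by I and all first partial derivatives of elements of I. Then the support supp(I,μ) = {points x : ord_x(I) ≥ μ} equals the zero set V(D^{μ−1}(I)), and in particular supp(I,μ) is Zariski closed. -/
open MvPolynomial

/-- The first derivative ideal: generated by `I` and all first partial derivatives of
elements of `I`. -/
noncomputable def derivIdeal {K : Type*} [CommRing K] {n : ℕ}
    (I : Ideal (MvPolynomial (Fin n) K)) : Ideal (MvPolynomial (Fin n) K) :=
  I ⊔ Ideal.span {g | ∃ f ∈ I, ∃ i : Fin n, g = pderiv i f}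

/-- The `k`-th iterated derivative ideal. -/
noncomputable def derivIdealIter {K : Type*} [CommRing K] {n : ℕ} (k : ℕ)
    (I : Ideal (MvPolynomial (Fin n) K)) : Ideal (MvPolynomial (Fin n) K) :=
  derivIdeal^[k] I

/-- The maximal ideal of polynomials vanishing at the point `x`. -/
noncomputable def ptIdeal {K : Type*} [CommRing K] {n : ℕ} (x : Fin n → K) :
    Ideal (MvPolynomial (Fin n) K) :=
  Ideal.span {g | ∃ j : Fin n, g = X j - C (x j)}

section Aux

variable {K : Type*} [CommRing K] {n : ℕ}

local notation "T[" x "] " f => ∑ i : Fin n, (X i - C (x i)) * pderiv i f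

lemma mem_ptIdeal_aux (x : Fin n → K) (f : MvPolynomial (Fin n) K) :
    f - C (eval x f) ∈ Ideal.span {g : MvPolynomial (Fin n) K | ∃ j : Fin n, g = X j - C (x j)} := by
  induction f using MvPolynomial.induction_on with
  | C a => simp
  | add p q hp hq =>
      have : p + q - C (eval x (p + q)) = (p - C (eval x p)) + (q - C (eval x q)) := by
        rw [map_add, map_add]; ring
      rw [this]; exact add_mem hp hq
  | mul_X p i hp =>
      have : p * X i - C (eval x (p * X i))
          = p * (X i - C (x i)) + (p - C (eval x p)) * C (x i) := by
        rw [map_mul, eval_X, map_mul]; ring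
      rw [this]
      exact add_mem (Ideal.mul_mem_left _ _ (Ideal.subset_span ⟨i, rfl⟩))
        (Ideal.mul_mem_right _ _ hp)

lemma le_ptIdeal_iff (x : Fin n → K) (J : Ideal (MvPolynomial (Fin n) K)) :
    J ≤ ptIdeal x ↔ ∀ f ∈ J, eval x f = 0 := by
  constructor
  · intro h f hf
    have hker : ptIdeal x ≤ RingHom.ker (eval x : MvPolynomial (Fin n) K →+* K) := by
      rw [ptIdeal, Ideal.span_le]
      rintro g ⟨j, rfl⟩
      simp [RingHom.mem_ker]
    simpa [RingHom.mem_ker] using hker (h hf)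
  · intro h f hf
    have := mem_ptIdeal_aux x f
    rw [h f hf, map_zero, sub_zero] at this
    exact this

lemma T_mul (x : Fin n → K) (a b : MvPolynomial (Fin n) K) :
    (T[x] (a * b)) = (T[x] a) * b + a * (T[x] b) := by
  simp only [pderiv_mul, mul_add]
  rw [Finset.sum_add_distrib, Finset.sum_mul, Finset.mul_sum]
  congr 1
  · exact Finset.sum_congr rfl fun i _ => by ring
  · exact Finset.sum_congr rfl fun i _ => by ring

lemma T_mem (x : Fin n → K) (f : MvPolynomial (Fin n) K) : (T[x] f) ∈ ptIdeal x :=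
  Submodule.sum_mem _ fun i _ =>
    Ideal.mul_mem_right _ _ (Ideal.subset_span ⟨i, rfl⟩)

/-- derivative drops the order by at most one -/
lemma pderiv_mem_pow (x : Fin n → K) (k : ℕ) (i : Fin n) :
    ∀ f ∈ ptIdeal x ^ (k + 1), pderiv i f ∈ ptIdeal x ^ k := by
  induction k with
  | zero => intro f _; simp [Ideal.one_eq_top]
  | succ k ih =>
      intro f hf
      rw [pow_succ] at hf
      refine Submodule.mul_induction_on hf ?_ ?_
      · intro a ha b hb
        rw [pderiv_mul]
        refine add_mem ?_ ?_
        · rw [pow_succ]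
          exact Ideal.mul_mem_mul (ih a ha) hb
        · exact Ideal.mul_mem_right _ _ ha
      · intro p q hp hq
        rw [map_add]; exact add_mem hp hq

/-- Euler identity, order one case. -/
lemma euler_one (x : Fin n → K) :
    ∀ a ∈ ptIdeal x, (a - T[x] a) ∈ ptIdeal x ^ 2 := by
  intro a ha
  induction ha using Submodule.span_induction with
  | mem g hg =>
      obtain ⟨j, rfl⟩ := hg
      have : (T[x] (X j - C (x j))) = X j - C (x j) := by
        rw [Finset.sum_eq_single j]
        · simp
        · intro i _ hij
          rw [map_sub, pderiv_C, pderiv_X]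
          simp [Pi.single_apply, hij]
        · simp
      rw [this, sub_self]
      exact zero_mem _
  | zero => simp
  | add p q hp hq hp' hq' =>
      have : p + q - (T[x] (p + q)) = (p - T[x] p) + (q - T[x] q) := by
        simp only [map_add, mul_add, Finset.sum_add_distrib]; ring
      rw [this]; exact add_mem hp' hq'
  | smul c a ha' h =>
      rw [smul_eq_mul]
      have : c * a - (T[x] (c * a)) = c * (a - T[x] a) - (T[x] c) * a := by
        rw [T_mul]; ring
      rw [this]
      refine sub_mem (Ideal.mul_mem_left _ _ h) ?_
      rw [sq]
      exact Ideal.mul_mem_mul (T_mem x c) ha'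

/-- Euler identity, general order. -/
lemma euler (x : Fin n → K) (k : ℕ) :
    ∀ f ∈ ptIdeal x ^ k,
      ((k : MvPolynomial (Fin n) K) * f - T[x] f) ∈ ptIdeal x ^ (k + 1) := by
  induction k with
  | zero =>
      intro f _
      rw [Nat.cast_zero, zero_mul, zero_sub, pow_one]
      exact neg_mem (T_mem x f)
  | succ k ih =>
      intro f hf
      rw [pow_succ] at hf
      refine Submodule.mul_induction_on hf ?_ ?_
      · intro a ha b hb
        have key : ((k + 1 : ℕ) : MvPolynomial (Fin n) K) * (a * b) - (T[x] (a * b))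
            = b * ((k : MvPolynomial (Fin n) K) * a - T[x] a) + a * (b - T[x] b) := by
          rw [T_mul]; push_cast; ring
        rw [key]
        refine add_mem ?_ ?_
        · have : ptIdeal x ^ (k + 1 + 1) = ptIdeal x * ptIdeal x ^ (k + 1) := by
            rw [← pow_succ']
          rw [this]
          exact Ideal.mul_mem_mul hb (ih a ha)
        · have : ptIdeal x ^ (k + 1 + 1) = ptIdeal x ^ k * ptIdeal x ^ 2 := by
            rw [← pow_add]
          rw [this]
          exact Ideal.mul_mem_mul ha (euler_one x b hb)
      · intro p q hp hq
        have : ((k + 1 : ℕ) : MvPolynomial (Fin n) K) * (p + q) - (T[x] (p + q))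
            = (((k + 1 : ℕ) : MvPolynomial (Fin n) K) * p - T[x] p)
              + (((k + 1 : ℕ) : MvPolynomial (Fin n) K) * q - T[x] q) := by
          simp only [map_add, mul_add, Finset.sum_add_distrib]; ring
        rw [this]; exact add_mem hp hq

end Aux

section Field

variable {K : Type*} [Field K] [CharZero K] {n : ℕ}

lemma step (x : Fin n → K) (I : Ideal (MvPolynomial (Fin n) K)) (k : ℕ) (hk : 0 < k) :
    I ≤ ptIdeal x ^ (k + 1) ↔ derivIdeal I ≤ ptIdeal x ^ k := by
  constructor
  · intro h
    rw [derivIdeal, sup_le_iff]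
    constructor
    · exact h.trans (Ideal.pow_le_pow_right (by omega))
    · rw [Ideal.span_le]
      rintro g ⟨f, hf, i, rfl⟩
      exact pderiv_mem_pow x k i f (h hf)
  · intro h f hf
    have hfD : f ∈ derivIdeal I := le_sup_left (α := Ideal (MvPolynomial (Fin n) K)) hf
    have hfm : f ∈ ptIdeal x ^ k := h hfD
    have hT : (∑ i : Fin n, (X i - C (x i)) * pderiv i f) ∈ ptIdeal x ^ (k + 1) := by
      rw [pow_succ']
      refine Submodule.sum_mem _ fun i _ => Ideal.mul_mem_mul (Ideal.subset_span ⟨i, rfl⟩) ?_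
      exact h ((le_sup_right : _ ≤ derivIdeal I) (Ideal.subset_span ⟨f, hf, i, rfl⟩))
    have hkf : (k : MvPolynomial (Fin n) K) * f ∈ ptIdeal x ^ (k + 1) := by
      have := euler x k f hfm
      have heq : (k : MvPolynomial (Fin n) K) * f
          = ((k : MvPolynomial (Fin n) K) * f - ∑ i : Fin n, (X i - C (x i)) * pderiv i f)
            + ∑ i : Fin n, (X i - C (x i)) * pderiv i f := by ring
      rw [heq]; exact add_mem this hT
    have hknz : ((k : K) : K) ≠ 0 := Nat.cast_ne_zero.mpr hk.ne'
    have : f = C ((k : K)⁻¹) * ((k : MvPolynomial (Fin n) K) * f) := by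
      rw [← mul_assoc, ← C_eq_coe_nat, ← C_mul, inv_mul_cancel₀ hknz, C_1, one_mul]
    rw [this]
    exact Ideal.mul_mem_left _ _ hkf

lemma iter_char (x : Fin n → K) (ν : ℕ) (I : Ideal (MvPolynomial (Fin n) K)) :
    I ≤ ptIdeal x ^ (ν + 1) ↔ derivIdealIter ν I ≤ ptIdeal x := by
  induction ν generalizing I with
  | zero => rw [pow_one]; rfl
  | succ ν ih =>
      rw [step x I (ν + 1) (Nat.succ_pos ν), derivIdealIter, Function.iterate_succ_apply]
      exact ih (derivIdeal I)

end Field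

/-- The support `supp(I,μ) = {x : ord_x(I) ≥ μ}` equals the zero set of the iterated
derivative ideal `D^{μ-1}(I)`; in particular it is Zariski closed (it is the zero set
of an ideal). -/
theorem stmt_2 {K : Type*} [Field K] [CharZero K] {n : ℕ}
    (I : Ideal (MvPolynomial (Fin n) K)) (μ : ℕ) (hμ : 0 < μ) :
    ({x : Fin n → K | I ≤ ptIdeal x ^ μ}
        = {x : Fin n → K | ∀ f ∈ derivIdealIter (μ - 1) I, eval x f = 0})
    ∧ ∃ J : Ideal (MvPolynomial (Fin n) K),
        {x : Fin n → K | I ≤ ptIdeal x ^ μ} = {x : Fin n → K | ∀ f ∈ J, eval x f = 0} := by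
  obtain ⟨ν, rfl⟩ : ∃ ν, μ = ν + 1 := ⟨μ - 1, (Nat.succ_pred_eq_of_pos hμ).symm⟩
  have hν : ν + 1 - 1 = ν := rfl
  have hset : {x : Fin n → K | I ≤ ptIdeal x ^ (ν + 1)}
      = {x : Fin n → K | ∀ f ∈ derivIdealIter ν I, eval x f = 0} := by
    ext x
    simp only [Set.mem_setOf_eq]
    rw [iter_char x ν I, le_ptIdeal_iff]
  rw [hν]
  exact ⟨hset, derivIdealIter ν I, hset⟩
end

section
/- Let φ: X' → X be an étale morphism of smooth varieties over a field K of characteristic zero and let I be a sheaf of ideals on X. Then the pullback of the derivative ideal equals the derivative ideal of the pullback: φ*(D(I)) = D(φ*(I)). -/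
/-!
For `φ*(D(I)) ⊆ D(φ*(I))`: every `K`-derivation of `R` extends to `S`, since for étale `R → S`
the Kähler differentials satisfy `Ω[S⁄K] ≅ S ⊗[R] Ω[R⁄K]`.

For the reverse inclusion, by the Leibniz rule it suffices to differentiate images of `f ∈ I`.
A derivation `d` of `S` restricted to `R` factors through `Ω[R⁄K]`, which is projective because
`R` is smooth; writing `D f` in a dual basis of `Ω[R⁄K]` expresses `d f` as an `S`-combination of
values `δ f` of derivations `δ` of `R`, all of which lie in `D(I)`.
-/

/-- The first derivative ideal of `I` relative to `K`: generated by `I` together with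
`d f` for all `K`-derivations `d` and `f ∈ I`. -/
noncomputable def derivationIdeal (K : Type*) {R : Type*} [CommRing K] [CommRing R]
    [Algebra K R] (I : Ideal R) : Ideal R :=
  I ⊔ Ideal.span {g | ∃ f ∈ I, ∃ d : Derivation K R R, g = d f}

universe u

section DerivationIdeal

variable {K R : Type*} [CommRing K] [CommRing R] [Algebra K R]

theorem le_derivationIdeal (I : Ideal R) : I ≤ derivationIdeal K I :=
  le_sup_left

theorem Derivation.apply_mem_derivationIdeal {I : Ideal R} (d : Derivation K R R) {f : R}
    (hf : f ∈ I) : d f ∈ derivationIdeal K I :=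
  Ideal.mem_sup_right (Ideal.subset_span ⟨f, hf, d, rfl⟩)

theorem derivationIdeal_le_iff {I J : Ideal R} :
    derivationIdeal K I ≤ J ↔ I ≤ J ∧ ∀ d : Derivation K R R, ∀ f ∈ I, d f ∈ J := by
  refine ⟨fun h => ⟨(le_derivationIdeal I).trans h,
    fun d f hf => h (d.apply_mem_derivationIdeal hf)⟩, fun ⟨hI, hd⟩ => sup_le hI ?_⟩
  rw [Ideal.span_le]
  rintro _ ⟨f, hf, d, rfl⟩
  exact hd d f hf

theorem Derivation.apply_mem_of_mem_span {s : Set R} {J : Ideal R} (d : Derivation K R R)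
    (hsJ : s ⊆ J) (hds : ∀ x ∈ s, d x ∈ J) {x : R} (hx : x ∈ Ideal.span s) : d x ∈ J := by
  induction hx using Submodule.span_induction with
  | mem x hx => exact hds x hx
  | zero => simp
  | add x y _ _ hx hy => simpa only [map_add] using add_mem hx hy
  | smul a x hx hdx =>
    rw [smul_eq_mul, Derivation.leibniz, smul_eq_mul, smul_eq_mul]
    exact add_mem (J.mul_mem_left a hdx)
      (J.mul_mem_right _ (Ideal.span_le.mpr hsJ hx))

end DerivationIdeal

open KaehlerDifferential

theorem Derivation.exists_extension_of_formallyEtale {K R S : Type*} [CommRing K] [CommRing R]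
    [CommRing S] [Algebra K R] [Algebra K S] [Algebra R S] [IsScalarTower K R S]
    [Algebra.FormallyEtale R S] (d : Derivation K R R) :
    ∃ d' : Derivation K S S, ∀ r, d' (algebraMap R S r) = algebraMap R S (d r) := by
  let φ : Ω[S⁄K] →ₗ[S] S :=
    LinearMap.liftBaseChange S (Algebra.linearMap R S ∘ₗ d.liftKaehlerDifferential) ∘ₗ
      (tensorKaehlerEquivOfFormallyEtale K R S).symm.toLinearMap
  refine ⟨φ.compDer (KaehlerDifferential.D K S), fun r => ?_⟩
  simp [φ, tensorKaehlerEquivOfFormallyEtale_symm_D_algebraMap]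

theorem Module.Projective.apply_mem_map_span_dual {R S P : Type*} [CommRing R] [CommRing S]
    [Algebra R S] [AddCommGroup P] [Module R P] [Module.Projective R P] (F : P →ₗ[R] S)
    (x : P) :
    F x ∈ Ideal.map (algebraMap R S) (Ideal.span (Set.range fun φ : Module.Dual R P => φ x)) := by
  obtain ⟨s, hs⟩ := Module.projective_def'.mp ‹Module.Projective R P›
  have hx : x = (s x).sum fun y c => c • y := by
    simpa [Finsupp.linearCombination_apply] using (LinearMap.congr_fun hs x).symm
  rw [congrArg F hx, map_finsuppSum]
  refine Submodule.sum_mem _ fun y _ => ?_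
  show F (s x y • y) ∈ _
  rw [map_smul, Algebra.smul_def]
  refine Ideal.mul_mem_right _ _ (Ideal.mem_map_of_mem _ (Ideal.subset_span ?_))
  exact ⟨Finsupp.lapply y ∘ₗ s, rfl⟩

theorem Derivation.apply_algebraMap_mem_map_derivationIdeal {K R S : Type*} [CommRing K]
    [CommRing R] [CommRing S] [Algebra K R] [Algebra K S] [Algebra R S] [IsScalarTower K R S]
    [Module.Projective R Ω[R⁄K]] {I : Ideal R} (d : Derivation K S S) {r : R} (hr : r ∈ I) :
    d (algebraMap R S r) ∈ Ideal.map (algebraMap R S) (derivationIdeal K I) := by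
  have h := Module.Projective.apply_mem_map_span_dual
    (d.compAlgebraMap R).liftKaehlerDifferential (KaehlerDifferential.D K R r)
  rw [Derivation.liftKaehlerDifferential_comp_D] at h
  refine Ideal.map_mono ?_ h
  rw [Ideal.span_le]
  rintro _ ⟨φ, rfl⟩
  exact (φ.compDer (KaehlerDifferential.D K R)).apply_mem_derivationIdeal hr

theorem stmt_5_general {K R S : Type u} [Field K] [CommRing R] [CommRing S]
    [Algebra K R] [Algebra K S] [Algebra R S] [IsScalarTower K R S]
    [Algebra.Smooth K R] [Algebra.Etale R S]
    (I : Ideal R) :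
    Ideal.map (algebraMap R S) (derivationIdeal K I)
      = derivationIdeal K (Ideal.map (algebraMap R S) I) := by
  apply le_antisymm
  · rw [Ideal.map_le_iff_le_comap, derivationIdeal_le_iff]
    refine ⟨fun f hf => le_derivationIdeal _ (Ideal.mem_map_of_mem _ hf), fun d f hf => ?_⟩
    obtain ⟨d', hd'⟩ := d.exists_extension_of_formallyEtale (S := S)
    rw [Ideal.mem_comap, ← hd']
    exact d'.apply_mem_derivationIdeal (Ideal.mem_map_of_mem _ hf)
  · rw [derivationIdeal_le_iff]
    refine ⟨Ideal.map_mono (le_derivationIdeal I), fun d g hg => ?_⟩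
    refine d.apply_mem_of_mem_span ?_ ?_ hg
    · rintro _ ⟨f, hf, rfl⟩
      exact Ideal.mem_map_of_mem _ (le_derivationIdeal I hf)
    · rintro _ ⟨f, hf, rfl⟩
      exact d.apply_algebraMap_mem_map_derivationIdeal hf

/-- For an étale morphism `φ : X' → X` of smooth varieties over a field `K` of
characteristic zero (affine model: `S` an étale algebra over `R`, both smooth over `K`)
and an ideal `I` of `R`, the pullback of the derivative ideal equals the derivative
ideal of the pullback: `φ*(D(I)) = D(φ*(I))`. -/
theorem stmt_5 {K R S : Type u} [Field K] [CharZero K] [CommRing R] [CommRing S]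
    [Algebra K R] [Algebra K S] [Algebra R S] [IsScalarTower K R S]
    [Algebra.Smooth K R] [Algebra.Smooth K S] [Algebra.Etale R S]
    (I : Ideal R) :
    Ideal.map (algebraMap R S) (derivationIdeal K I)
      = derivationIdeal K (Ideal.map (algebraMap R S) I) :=
  stmt_5_general I
end

section
/- Let K be a field of characteristic zero and let f, h, u_1, ..., u_n be formal power series with h in the ideal T. Then the Taylor expansion identity f(u_1+h, u_2, ..., u_n) = Σ_{i≥0} (1/i!)·(∂^i f/∂u_1^i)·h^i holds in K[[u_1,...,u_n]], and consequently if f ∈ I, the element f(u_1+h, u_2,...,u_n) lies in the ideal I + D(I)·T + D^2(I)·T^2 + ... + D^{μ-1}(I)·T^{μ-1} + ... where D is the derivative operation, provided h ∈ T. -/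
open MvPolynomial

section Aux
variable {K : Type*} [Field K] [CharZero K] {n : ℕ} [NeZero n]

lemma iter_pderiv_monomial (s : Fin n →₀ ℕ) (a : K) (i : ℕ) :
    (pderiv (0 : Fin n))^[i] (monomial s a)
      = monomial (s - Finsupp.single 0 i) (a * ((s 0).descFactorial i : K)) := by
  induction i generalizing s a with
  | zero => simp
  | succ i ih =>
    rw [Function.iterate_succ_apply, pderiv_monomial, ih]
    have h1 : s - Finsupp.single (0 : Fin n) 1 - Finsupp.single 0 i
        = s - Finsupp.single 0 (i + 1) := by
      rw [tsub_tsub, ← Finsupp.single_add, add_comm]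
    have h2 := Finsupp.tsub_apply s (Finsupp.single (0 : Fin n) 1) 0
    rw [Finsupp.single_eq_same] at h2
    rw [h1, h2]
    congr 1
    cases hs : s 0 with
    | zero => simp
    | succ m => rw [Nat.succ_descFactorial_succ]; push_cast; ring

omit [CharZero K] in
lemma aeval_no_x0 (h : MvPolynomial (Fin n) K) (s : Fin n →₀ ℕ) (a : K) (hs : s 0 = 0) :
    aeval (fun i : Fin n => if i = 0 then X 0 + h else X i) (monomial s a) = monomial s a := by
  rw [aeval_monomial]
  have hp : (s.prod fun j k => (if j = 0 then X 0 + h else X j) ^ k)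
      = s.prod fun j k => (X j : MvPolynomial (Fin n) K) ^ k := by
    apply Finsupp.prod_congr
    intro j hj
    have hj0 : j ≠ 0 := by rintro rfl; simp [Finsupp.mem_support_iff, hs] at hj
    simp [hj0]
  rw [hp, algebraMap_eq, ← monomial_eq]

lemma taylor_monomial (h : MvPolynomial (Fin n) K) (s : Fin n →₀ ℕ) (a : K) (N : ℕ)
    (hN : s 0 ≤ N) :
    aeval (fun i : Fin n => if i = 0 then X 0 + h else X i) (monomial s a)
      = ∑ i ∈ Finset.range (N + 1),
          (i.factorial : K)⁻¹ • ((pderiv (0 : Fin n))^[i] (monomial s a) * h ^ i) := by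
  set σ := fun i : Fin n => if i = 0 then X 0 + h else X i with hσ
  set e := monomial (s.erase 0) a with he
  have hsplit : monomial s a = e * X 0 ^ (s 0) := by
    rw [he, X_pow_eq_monomial, monomial_mul, mul_one, Finsupp.erase_add_single]
  have key : ∀ i ∈ Finset.range (N + 1),
      (i.factorial : K)⁻¹ • ((pderiv (0 : Fin n))^[i] (monomial s a) * h ^ i)
        = e * (h ^ i * X 0 ^ (s 0 - i) * ((s 0).choose i : MvPolynomial (Fin n) K)) := by
    intro i _
    rw [iter_pderiv_monomial]
    have hsub : s - Finsupp.single (0 : Fin n) i = s.erase 0 + Finsupp.single 0 (s 0 - i) := by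
      ext j
      by_cases hj : j = 0
      · simp [hj, Finsupp.tsub_apply]
      · simp [Finsupp.tsub_apply, Finsupp.single_apply, Finsupp.erase_apply, hj, Ne.symm hj]
    have hmon : monomial (s - Finsupp.single (0 : Fin n) i) (a * ((s 0).descFactorial i : K))
        = e * X 0 ^ (s 0 - i) * C ((s 0).descFactorial i : K) := by
      rw [hsub, he, X_pow_eq_monomial, C_apply, monomial_mul, monomial_mul]
      simp
    rw [hmon, smul_eq_C_mul]
    have hd : ((s 0).descFactorial i : K) = (i.factorial : K) * ((s 0).choose i : K) := by
      rw [Nat.descFactorial_eq_factorial_mul_choose]; push_cast; ring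
    rw [hd]
    have hfac : (i.factorial : K) ≠ 0 := Nat.cast_ne_zero.mpr i.factorial_ne_zero
    have hc : C ((i.factorial : K)⁻¹) * C ((i.factorial : K) * ((s 0).choose i : K))
        = ((s 0).choose i : MvPolynomial (Fin n) K) := by
      rw [← C_mul, ← mul_assoc, inv_mul_cancel₀ hfac, one_mul,
        ← map_natCast (C : K →+* MvPolynomial (Fin n) K)]
    linear_combination (e * X 0 ^ (s 0 - i) * h ^ i) * hc
  rw [Finset.sum_congr rfl key, ← Finset.mul_sum]
  have hsum : ∑ i ∈ Finset.range (N + 1),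
      h ^ i * X 0 ^ (s 0 - i) * ((s 0).choose i : MvPolynomial (Fin n) K)
      = (h + X 0) ^ (s 0) := by
    rw [add_pow]
    refine (Finset.sum_subset (Finset.range_subset_range.mpr (by omega)) ?_).symm
    intro x hx hx'
    have hlt : s 0 < x := by
      simp only [Finset.mem_range] at hx hx'; omega
    simp [Nat.choose_eq_zero_of_lt hlt]
  rw [hsum, hsplit, map_mul, map_pow, aeval_X]
  have he0 : aeval σ e = e := aeval_no_x0 h _ a (by simp)
  rw [he0]
  have : σ 0 = X 0 + h := by simp [hσ]
  rw [this, add_comm (X (0:Fin n)) h]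

omit [CharZero K] in
lemma iter_pderiv_sum (i : ℕ) (t : Finset (Fin n →₀ ℕ)) (g : (Fin n →₀ ℕ) → MvPolynomial (Fin n) K) :
    (pderiv (0 : Fin n))^[i] (∑ s ∈ t, g s) = ∑ s ∈ t, (pderiv (0 : Fin n))^[i] (g s) := by
  induction i with
  | zero => simp
  | succ i ih =>
    rw [Function.iterate_succ_apply', ih, map_sum]
    simp [Function.iterate_succ_apply']

lemma taylor_main (h f : MvPolynomial (Fin n) K) (N : ℕ) (hN : f.totalDegree ≤ N) :
    aeval (fun i : Fin n => if i = 0 then X 0 + h else X i) f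
      = ∑ i ∈ Finset.range (N + 1),
          (i.factorial : K)⁻¹ • ((pderiv (0 : Fin n))^[i] f * h ^ i) := by
  set σ := fun i : Fin n => if i = 0 then X 0 + h else X i with hσ
  have h0 : ∀ s : Fin n →₀ ℕ, s ∈ f.support → s 0 ≤ N := by
    intro s hs
    have h1 : s 0 ≤ s.sum fun _ e => e := by
      by_cases h : 0 ∈ s.support
      · exact Finset.single_le_sum (f := fun j => s j) (fun _ _ => Nat.zero_le _) h
      · simp [Finsupp.notMem_support_iff.mp h]
    exact le_trans (le_trans h1 (MvPolynomial.le_totalDegree hs)) hN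
  calc aeval σ f = ∑ s ∈ f.support, aeval σ (monomial s (coeff s f)) := by
        rw [← map_sum, ← as_sum]
    _ = ∑ s ∈ f.support, ∑ i ∈ Finset.range (N + 1),
          (i.factorial : K)⁻¹ • ((pderiv (0 : Fin n))^[i] (monomial s (coeff s f)) * h ^ i) :=
        Finset.sum_congr rfl fun s hs => taylor_monomial h s _ N (h0 s hs)
    _ = ∑ i ∈ Finset.range (N + 1),
          (i.factorial : K)⁻¹ • ((pderiv (0 : Fin n))^[i] f * h ^ i) := by
        rw [Finset.sum_comm]
        refine Finset.sum_congr rfl fun i _ => ?_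
        rw [← Finset.smul_sum, ← Finset.sum_mul, ← iter_pderiv_sum, ← as_sum]

end Aux

/-- Taylor expansion identity for the substitution `u_1 ↦ u_1 + h`:
`f(u_1+h, u_2, ..., u_n) = Σ_i (1/i!)·(∂^i f/∂u_1^i)·h^i`, and consequently if `f ∈ I`
and `h ∈ T`, the substituted element lies in the ideal
`I + D(I)·T + D²(I)·T² + ... + D^i(I)·T^i + ...`. -/
theorem stmt_7 {K : Type*} [Field K] [CharZero K] {n : ℕ} [NeZero n]
    (I T : Ideal (MvPolynomial (Fin n) K)) (f h : MvPolynomial (Fin n) K)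
    (hf : f ∈ I) (hh : h ∈ T) :
    (aeval (fun i : Fin n => if i = 0 then X 0 + h else X i) f
        = ∑ i ∈ Finset.range (f.totalDegree + 1),
            (i.factorial : K)⁻¹ • ((pderiv (0 : Fin n))^[i] f * h ^ i))
    ∧ aeval (fun i : Fin n => if i = 0 then X 0 + h else X i) f
        ∈ ⨆ i : ℕ, derivIdealIter i I * T ^ i := by
  have h1 := taylor_main h f f.totalDegree le_rfl
  refine ⟨h1, ?_⟩
  rw [h1]
  have mem : ∀ i : ℕ, (pderiv (0 : Fin n))^[i] f ∈ derivIdealIter i I := by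
    intro i
    induction i with
    | zero => simpa [derivIdealIter] using hf
    | succ i ih =>
      rw [Function.iterate_succ_apply']
      have hiter : derivIdealIter (i + 1) I = derivIdeal (derivIdealIter i I) := by
        simp [derivIdealIter, Function.iterate_succ_apply']
      rw [hiter]
      exact Ideal.mem_sup_right (Ideal.subset_span ⟨_, ih, 0, rfl⟩)
  refine Ideal.sum_mem _ fun i _ => ?_
  have : (i.factorial : K)⁻¹ • ((pderiv (0 : Fin n))^[i] f * h ^ i)
      ∈ derivIdealIter i I * T ^ i := by
    rw [smul_eq_C_mul]
    exact Ideal.mul_mem_left _ _ (Ideal.mul_mem_mul (mem i) (Ideal.pow_mem_pow hh i))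
  exact (le_iSup (fun i : ℕ => derivIdealIter i I * T ^ i) i) this
end

section
/- Let (I,μ) be an ideal of maximal order in characteristic zero (meaning D^μ(I) is the unit ideal), and set T(I) := D^{μ−1}(I) and H(I) := Σ_{i=0}^{μ−1} D^i(I)·T(I)^i. Then H(I) is stable under further homogenization-related operations: (a) H(I) = Σ_{i≥0} D^i(I)·T(I)^i (the terms for i ≥ μ are redundant), and (b) T(H(I)) := D^{μ−1}(H(I)) equals T(I). -/
open MvPolynomial

/-!
The Leibniz rule gives `D(J·L) ⊆ D(J)·L + J·D(L)`, hence `D(T^{i+1}) ⊆ T^i`, and by induction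
`D^k(Σ_i D^i(I)·T^i) ⊆ Σ_i D^{i+k}(I)·T^i` for every ideal `T`. Take `T = D^{μ-1}(I)` and
`k = μ - 1`: the summand `i = 0` is `T`, and for `i ≥ 1` we have `D^{i+μ-1}(I) = (1)`, so the
summand is `T^i ⊆ T`. This gives `T(H(I)) ⊆ T(I)`; the reverse inclusion holds as `I ⊆ H(I)`.
For (a), a summand with `i ≥ μ` is `T^i ⊆ T^μ = D^{μ-1}(I)·T^{μ-1}`.
-/

section

variable {K : Type*} [CommRing K] {n : ℕ}

lemma le_derivIdeal (I : Ideal (MvPolynomial (Fin n) K)) : I ≤ derivIdeal I :=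
  le_sup_left

lemma pderiv_mem_derivIdeal {I : Ideal (MvPolynomial (Fin n) K)} {f : MvPolynomial (Fin n) K}
    (hf : f ∈ I) (i : Fin n) : pderiv i f ∈ derivIdeal I :=
  Submodule.mem_sup_right (Ideal.subset_span ⟨f, hf, i, rfl⟩)

lemma derivIdeal_mono : Monotone (derivIdeal (K := K) (n := n)) := by
  intro I J h
  refine sup_le (h.trans le_sup_left) ((Ideal.span_mono ?_).trans le_sup_right)
  rintro _ ⟨f, hf, i, rfl⟩
  exact ⟨f, h hf, i, rfl⟩

lemma derivIdeal_top : derivIdeal (⊤ : Ideal (MvPolynomial (Fin n) K)) = ⊤ :=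
  top_le_iff.mp le_sup_left

lemma derivIdeal_mul_le (J L : Ideal (MvPolynomial (Fin n) K)) :
    derivIdeal (J * L) ≤ derivIdeal J * L ⊔ J * derivIdeal L := by
  refine sup_le (le_sup_of_le_left (Ideal.mul_mono_left (le_derivIdeal J))) ?_
  rw [Ideal.span_le]
  rintro _ ⟨f, hf, i, rfl⟩
  refine Submodule.mul_induction_on hf (fun a ha b hb => ?_) (fun x y hx hy => ?_)
  · rw [pderiv_mul]
    exact add_mem (Submodule.mem_sup_left (Ideal.mul_mem_mul (pderiv_mem_derivIdeal ha i) hb))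
      (Submodule.mem_sup_right (Ideal.mul_mem_mul ha (pderiv_mem_derivIdeal hb i)))
  · rw [map_add]
    exact add_mem hx hy

lemma derivIdeal_pow_succ_le (T : Ideal (MvPolynomial (Fin n) K)) (i : ℕ) :
    derivIdeal (T ^ (i + 1)) ≤ T ^ i := by
  induction i with
  | zero => simp
  | succ i ih =>
    calc derivIdeal (T ^ (i + 1) * T)
        ≤ derivIdeal (T ^ (i + 1)) * T ⊔ T ^ (i + 1) * derivIdeal T := derivIdeal_mul_le _ _
      _ ≤ T ^ (i + 1) :=
        sup_le ((Ideal.mul_mono_left ih).trans_eq (pow_succ T i).symm) Ideal.mul_le_left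

lemma derivIdeal_iSup_le {ι : Sort*} (F : ι → Ideal (MvPolynomial (Fin n) K)) :
    derivIdeal (⨆ i, F i) ≤ ⨆ i, derivIdeal (F i) := by
  refine sup_le (iSup_mono fun i => le_derivIdeal _) ?_
  rw [Ideal.span_le]
  rintro _ ⟨f, hf, j, rfl⟩
  refine Submodule.iSup_induction (motive := fun x => pderiv j x ∈ ⨆ i, derivIdeal (F i)) F hf
    (fun i x hx => Submodule.mem_iSup_of_mem i (pderiv_mem_derivIdeal hx j)) (by simp)
    (fun x y hx hy => ?_)
  rw [map_add]
  exact add_mem hx hy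

lemma derivIdealIter_succ (k : ℕ) (I : Ideal (MvPolynomial (Fin n) K)) :
    derivIdealIter (k + 1) I = derivIdeal (derivIdealIter k I) :=
  Function.iterate_succ_apply' _ _ _

lemma derivIdealIter_mono (k : ℕ) : Monotone (derivIdealIter (K := K) (n := n) k) :=
  derivIdeal_mono.iterate k

lemma derivIdealIter_monotone (I : Ideal (MvPolynomial (Fin n) K)) :
    Monotone fun k => derivIdealIter k I :=
  monotone_nat_of_le_succ fun k => (le_derivIdeal _).trans_eq (derivIdealIter_succ k I).symm

lemma derivIdealIter_eq_top_of_le {I : Ideal (MvPolynomial (Fin n) K)} {k l : ℕ}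
    (hk : derivIdealIter k I = ⊤) (h : k ≤ l) : derivIdealIter l I = ⊤ :=
  top_le_iff.mp (hk ▸ derivIdealIter_monotone I h)

lemma derivIdeal_iSup_derivIdealIter_mul_pow_le (I T : Ideal (MvPolynomial (Fin n) K)) (k : ℕ) :
    derivIdeal (⨆ i : ℕ, derivIdealIter (i + k) I * T ^ i)
      ≤ ⨆ i : ℕ, derivIdealIter (i + (k + 1)) I * T ^ i := by
  refine (derivIdeal_iSup_le _).trans (iSup_le fun i => ?_)
  refine (derivIdeal_mul_le _ _).trans (sup_le ?_ ?_)
  · refine le_iSup_of_le i (le_of_eq ?_)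
    rw [← derivIdealIter_succ, add_assoc]
  · cases i with
    | zero =>
      refine le_iSup_of_le 0 ?_
      simpa [derivIdeal_top] using derivIdealIter_monotone I k.le_succ
    | succ i =>
      refine le_iSup_of_le i (Ideal.mul_mono (le_of_eq ?_) (derivIdeal_pow_succ_le T i))
      rw [Nat.add_right_comm, add_assoc]

lemma derivIdealIter_iSup_mul_pow_le (I T : Ideal (MvPolynomial (Fin n) K)) (k : ℕ) :
    derivIdealIter k (⨆ i : ℕ, derivIdealIter i I * T ^ i)
      ≤ ⨆ i : ℕ, derivIdealIter (i + k) I * T ^ i := by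
  induction k with
  | zero => exact le_rfl
  | succ k ih =>
    rw [derivIdealIter_succ]
    exact (derivIdeal_mono ih).trans (derivIdeal_iSup_derivIdealIter_mul_pow_le I T k)

variable {I : Ideal (MvPolynomial (Fin n) K)} {m : ℕ}

lemma derivIdealIter_iSup_mul_pow_le_self (hmax : derivIdealIter (m + 1) I = ⊤) :
    derivIdealIter m (⨆ i : ℕ, derivIdealIter i I * derivIdealIter m I ^ i)
      ≤ derivIdealIter m I := by
  refine (derivIdealIter_iSup_mul_pow_le I _ m).trans (iSup_le fun i => ?_)
  cases i with
  | zero => simp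
  | succ i =>
    rw [derivIdealIter_eq_top_of_le hmax (by omega), Ideal.top_mul]
    exact Ideal.pow_le_self i.succ_ne_zero

lemma sum_range_derivIdealIter_mul_pow_eq_iSup (hmax : derivIdealIter (m + 1) I = ⊤) :
    ∑ i ∈ Finset.range (m + 1), derivIdealIter i I * derivIdealIter m I ^ i
      = ⨆ i : ℕ, derivIdealIter i I * derivIdealIter m I ^ i := by
  set T := derivIdealIter m I
  rw [Ideal.sum_eq_sup]
  refine le_antisymm (Finset.sup_le fun i _ => le_iSup_of_le i le_rfl) (iSup_le fun i => ?_)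
  rcases lt_or_ge i (m + 1) with hi | hi
  · exact Finset.le_sup (f := fun i => derivIdealIter i I * T ^ i) (Finset.mem_range.mpr hi)
  · refine le_trans ?_ (Finset.le_sup (f := fun i => derivIdealIter i I * T ^ i)
      (Finset.mem_range.mpr m.lt_succ_self))
    calc derivIdealIter i I * T ^ i = T ^ i := by
          rw [derivIdealIter_eq_top_of_le hmax hi, Ideal.top_mul]
      _ ≤ T ^ (m + 1) := Ideal.pow_le_pow_right hi
      _ = T * T ^ m := pow_succ' T m

end

theorem stmt_8_general {K : Type*} [Field K] {n : ℕ}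
    (I : Ideal (MvPolynomial (Fin n) K)) (μ : ℕ) (hμ : 1 ≤ μ)
    (hmax : derivIdealIter μ I = ⊤) :
    ((∑ i ∈ Finset.range μ, derivIdealIter i I * derivIdealIter (μ - 1) I ^ i)
        = ⨆ i : ℕ, derivIdealIter i I * derivIdealIter (μ - 1) I ^ i)
    ∧ derivIdealIter (μ - 1)
          (∑ i ∈ Finset.range μ, derivIdealIter i I * derivIdealIter (μ - 1) I ^ i)
        = derivIdealIter (μ - 1) I := by
  obtain ⟨m, rfl⟩ := Nat.exists_eq_add_of_le' hμ
  rw [Nat.add_sub_cancel]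
  have hsum := sum_range_derivIdealIter_mul_pow_eq_iSup hmax
  refine ⟨hsum, le_antisymm ?_ ?_⟩
  · rw [hsum]
    exact derivIdealIter_iSup_mul_pow_le_self hmax
  · rw [hsum]
    exact derivIdealIter_mono m (le_iSup_of_le 0 (by simp [derivIdealIter]))

/-- For `(I,μ)` of maximal order (`D^μ(I) = (1)`), with `T(I) = D^{μ−1}(I)` and
`H(I) = Σ_{i=0}^{μ−1} D^i(I)·T(I)^i`:
(a) `H(I) = Σ_{i≥0} D^i(I)·T(I)^i` (the terms for `i ≥ μ` are redundant), and
(b) `T(H(I)) = D^{μ−1}(H(I)) = T(I)`. -/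
theorem stmt_8 {K : Type*} [Field K] [CharZero K] {n : ℕ}
    (I : Ideal (MvPolynomial (Fin n) K)) (μ : ℕ) (hμ : 1 ≤ μ)
    (hmax : derivIdealIter μ I = ⊤) :
    ((∑ i ∈ Finset.range μ, derivIdealIter i I * derivIdealIter (μ - 1) I ^ i)
        = ⨆ i : ℕ, derivIdealIter i I * derivIdealIter (μ - 1) I ^ i)
    ∧ derivIdealIter (μ - 1)
          (∑ i ∈ Finset.range μ, derivIdealIter i I * derivIdealIter (μ - 1) I ^ i)
        = derivIdealIter (μ - 1) I :=
  stmt_8_general I μ hμ hmax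
end

section
/- Let Y be an affine variety over a field K with coordinate ring K[Y] generated by g_1,...,g_n and also by h_1,...,h_n, giving two closed embeddings φ_1, φ_2: Y → A^n. Define three embeddings Ψ_0, Ψ_1, Ψ_2: Y → A^{2n} by Ψ_0(x) = (g(x), h(x)), Ψ_1(x) = (g(x), 0), Ψ_2(x) = (0, h(x)). Then there exist polynomial automorphisms Φ_1, Φ_2 of A^{2n} such that Φ_i ∘ Ψ_0 = Ψ_i for i = 1, 2. -/
open MvPolynomial

lemma fixes_rename_inl {K : Type*} [Field K] {σ τ : Type*}
    (H : MvPolynomial (σ ⊕ τ) K →ₐ[K] MvPolynomial (σ ⊕ τ) K)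
    (hX : ∀ i, H (X (Sum.inl i)) = X (Sum.inl i)) (p : MvPolynomial σ K) :
    H (rename Sum.inl p) = rename Sum.inl p := by
  have : H.comp (rename Sum.inl) = rename Sum.inl := by
    apply algHom_ext
    intro i
    simp [hX]
  exact congrFun (congrArg DFunLike.coe this) p

lemma shear_aux {K A : Type*} [Field K] [CommRing A] [Algebra K A] {σ τ : Type*}
    (g : σ → A) (h : τ → A) (v : τ → MvPolynomial σ K) (hv : ∀ j, aeval g (v j) = h j) :
    ∃ Φ : MvPolynomial (σ ⊕ τ) K ≃ₐ[K] MvPolynomial (σ ⊕ τ) K,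
      (aeval (Sum.elim g h)).comp Φ.toAlgHom = aeval (Sum.elim g (fun _ => (0 : A))) := by
  let F : MvPolynomial (σ ⊕ τ) K →ₐ[K] MvPolynomial (σ ⊕ τ) K :=
    aeval (Sum.elim (fun i => X (Sum.inl i)) (fun j => X (Sum.inr j) - rename Sum.inl (v j)))
  let G : MvPolynomial (σ ⊕ τ) K →ₐ[K] MvPolynomial (σ ⊕ τ) K :=
    aeval (Sum.elim (fun i => X (Sum.inl i)) (fun j => X (Sum.inr j) + rename Sum.inl (v j)))
  have hFX : ∀ i, F (X (Sum.inl i)) = X (Sum.inl i) := by intro i; simp [F]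
  have hGX : ∀ i, G (X (Sum.inl i)) = X (Sum.inl i) := by intro i; simp [G]
  have hFG : F.comp G = AlgHom.id K _ := by
    apply algHom_ext
    rintro (i | j)
    · simp [F, G]
    · simp only [AlgHom.coe_comp, Function.comp_apply, AlgHom.id_apply, G, aeval_X,
        Sum.elim_inr, map_add]
      rw [fixes_rename_inl F hFX]
      simp [F]
  have hGF : G.comp F = AlgHom.id K _ := by
    apply algHom_ext
    rintro (i | j)
    · simp [F, G]
    · simp only [AlgHom.coe_comp, Function.comp_apply, AlgHom.id_apply, F, aeval_X,
        Sum.elim_inr, map_sub]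
      rw [fixes_rename_inl G hGX]
      simp [G]
  refine ⟨AlgEquiv.ofAlgHom F G hFG hGF, ?_⟩
  apply algHom_ext
  rintro (i | j)
  · simp [F]
  · show aeval (Sum.elim g h) (F (X (Sum.inr j))) = aeval (Sum.elim g (fun _ => (0 : A))) (X (Sum.inr j))
    simp only [F, aeval_X, Sum.elim_inr, map_sub, aeval_rename, Sum.elim_comp_inl, hv]
    simp

/-- If the coordinate ring of an affine variety `Y` is generated over `K` both by
`g_1,...,g_n` and by `h_1,...,h_n` (giving closed embeddings `φ_1, φ_2 : Y → 𝔸^n`),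
then the diagonal embedding `Ψ_0 = (g,h) : Y → 𝔸^{2n}` is carried to
`Ψ_1 = (g,0)` and `Ψ_2 = (0,h)` by polynomial automorphisms `Φ_1, Φ_2` of `𝔸^{2n}`:
`Φ_i ∘ Ψ_0 = Ψ_i` (stated dually on coordinate rings). -/
theorem stmt_10 {K A : Type*} [Field K] [CommRing A] [Algebra K A] {n : ℕ}
    (g h : Fin n → A)
    (hg : Algebra.adjoin K (Set.range g) = ⊤)
    (hh : Algebra.adjoin K (Set.range h) = ⊤) :
    ∃ Φ₁ Φ₂ : MvPolynomial (Fin n ⊕ Fin n) K ≃ₐ[K] MvPolynomial (Fin n ⊕ Fin n) K,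
      (aeval (Sum.elim g h)).comp Φ₁.toAlgHom = aeval (Sum.elim g (fun _ => (0 : A)))
      ∧ (aeval (Sum.elim g h)).comp Φ₂.toAlgHom = aeval (Sum.elim (fun _ => (0 : A)) h) := by
  have sg : Function.Surjective (aeval (R := K) g) := by
    rw [← AlgHom.range_eq_top, ← Algebra.adjoin_range_eq_range_aeval, hg]
  have sh : Function.Surjective (aeval (R := K) h) := by
    rw [← AlgHom.range_eq_top, ← Algebra.adjoin_range_eq_range_aeval, hh]
  choose v hv using fun j => sg (h j)
  choose w hw using fun i => sh (g i)
  obtain ⟨Φ₁, hΦ₁⟩ := shear_aux g h v hv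
  obtain ⟨Φ, hΦ⟩ := shear_aux h g w hw
  let e : MvPolynomial (Fin n ⊕ Fin n) K ≃ₐ[K] MvPolynomial (Fin n ⊕ Fin n) K :=
    renameEquiv K (Equiv.sumComm (Fin n) (Fin n))
  refine ⟨Φ₁, (e.trans Φ).trans e, hΦ₁, ?_⟩
  have he : ∀ (a b : Fin n → A),
      (aeval (Sum.elim a b)).comp e.toAlgHom = aeval (Sum.elim b a) := by
    intro a b
    apply algHom_ext
    rintro (i | j) <;> simp [e]
  have hcomp : ((e.trans Φ).trans e).toAlgHom
      = (e.toAlgHom.comp Φ.toAlgHom).comp e.toAlgHom := rfl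
  rw [hcomp, ← AlgHom.comp_assoc, ← AlgHom.comp_assoc, he g h, hΦ,
    he h (fun _ => 0)]
end

section
/- Let K be a field of characteristic zero and let I ⊆ K[u_1,...,u_n] be an ideal with I ⊆ (u_1,...,u_m)^μ. In the blow-up chart given by u_i = u'_i·y for i < m, u_m = y, u_i = u'_i for i > m, set σ^c(I) := y^{−μ}·σ*(I) (a legitimate ideal of the chart ring). Then the derivative ideal satisfies σ^c(D(I)) ⊆ D(σ^c(I)), where for a marked ideal D is weighted so that σ^c(D(I)) = y^{−μ+1}·σ*(D(I)). -/
open MvPolynomial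

/-- The standard chart of the blow-up of the coordinate subspace
`{u_1 = ... = u_m = 0}`: `u_i ↦ u'_i · y` for `i < m`, `u_m ↦ y`, `u_i ↦ u'_i` for
`i > m`, where `y = X m` is the exceptional coordinate. -/
noncomputable def blowChart (K : Type*) [CommSemiring K] {n : ℕ} (m : Fin n) :
    MvPolynomial (Fin n) K →ₐ[K] MvPolynomial (Fin n) K :=
  aeval (fun i : Fin n => if i < m then X i * X m else X i)

/-- The controlled transform `σ^c(I) = y^{−μ}·σ*(I)` in the chart, as the ideal
generated by the `g` with `σ*(f) = y^μ · g` for `f ∈ I`. -/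
noncomputable def ctrans {K : Type*} [Field K] {n : ℕ} (m : Fin n) (μ : ℕ)
    (I : Ideal (MvPolynomial (Fin n) K)) : Ideal (MvPolynomial (Fin n) K) :=
  Ideal.span {g | ∃ f ∈ I, blowChart K m f = X m ^ μ * g}

lemma chain_rule {K : Type*} [CommSemiring K] {n : ℕ}
    (w : Fin n → MvPolynomial (Fin n) K) (j : Fin n) (p : MvPolynomial (Fin n) K) :
    pderiv j (aeval w p) = ∑ i, aeval w (pderiv i p) * pderiv j (w i) := by
  induction p using MvPolynomial.induction_on with
  | C a => simp
  | add p q hp hq =>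
    rw [map_add, map_add, hp, hq, ← Finset.sum_add_distrib]
    exact Finset.sum_congr rfl fun i _ => by rw [map_add, map_add, add_mul]
  | mul_X p i hp =>
    have key : ∀ i' : Fin n, aeval w (pderiv i' (p * X i)) * pderiv j (w i')
        = aeval w (pderiv i' p) * pderiv j (w i') * w i
          + aeval w p * (aeval w (pderiv i' (X i : MvPolynomial (Fin n) K)) * pderiv j (w i')) := by
      intro i'
      rw [pderiv_mul, map_add, map_mul, map_mul, aeval_X]
      ring
    have h2 : ∑ i', aeval w (pderiv i' (X i : MvPolynomial (Fin n) K)) * pderiv j (w i')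
        = pderiv j (w i) := by
      rw [Finset.sum_eq_single i
        (fun b _ hb => by rw [pderiv_X_of_ne (Ne.symm hb)]; simp)
        (by simp)]
      simp
    rw [map_mul, aeval_X, pderiv_mul, hp,
      Finset.sum_congr rfl fun i' _ => key i', Finset.sum_add_distrib,
      ← Finset.sum_mul, ← Finset.mul_sum, h2]

lemma blowChart_eq {K : Type*} [CommSemiring K] {n : ℕ} (m : Fin n)
    (p : MvPolynomial (Fin n) K) :
    blowChart K m p = aeval (fun i : Fin n => if i < m then X i * X m else X i) p := rfl

lemma pderiv_w {K : Type*} [CommSemiring K] {n : ℕ} (m j i : Fin n) :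
    pderiv j ((fun i : Fin n => if i < m then (X i * X m : MvPolynomial (Fin n) K) else X i) i)
      = if i < m then ((if j = i then (X m : MvPolynomial (Fin n) K) else 0)
          + (if j = m then X i else 0))
        else (if j = i then 1 else 0) := by
  simp only []
  by_cases h : i < m
  · rw [if_pos h, if_pos h, pderiv_mul]
    by_cases h1 : j = i
    · subst h1
      rw [pderiv_X_self, pderiv_X_of_ne (ne_of_gt h), if_pos rfl, if_neg (ne_of_lt h)]
      ring
    · rw [pderiv_X_of_ne (fun hh => h1 hh.symm), if_neg h1]
      by_cases h2 : j = m
      · subst h2; rw [pderiv_X_self, if_pos rfl]; ring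
      · rw [pderiv_X_of_ne (fun hh => h2 hh.symm), if_neg h2]; ring
  · rw [if_neg h, if_neg h]
    by_cases h1 : j = i
    · subst h1; rw [pderiv_X_self, if_pos rfl]
    · rw [pderiv_X_of_ne (fun hh => h1 hh.symm), if_neg h1]

lemma pd_lt {K : Type*} [CommSemiring K] {n : ℕ} {m j : Fin n} (hj : j < m)
    (p : MvPolynomial (Fin n) K) :
    pderiv j (blowChart K m p) = blowChart K m (pderiv j p) * X m := by
  rw [blowChart_eq, chain_rule]
  rw [Finset.sum_eq_single j (fun b _ hb => by
      rw [pderiv_w m j b]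
      have h1 : j ≠ b := fun h => hb h.symm
      simp [h1, hj.ne]) (by simp)]
  rw [pderiv_w m j j]
  simp [hj, hj.ne, blowChart_eq]

lemma pd_gt {K : Type*} [CommSemiring K] {n : ℕ} {m j : Fin n} (hj : m < j)
    (p : MvPolynomial (Fin n) K) :
    pderiv j (blowChart K m p) = blowChart K m (pderiv j p) := by
  rw [blowChart_eq, chain_rule]
  rw [Finset.sum_eq_single j (fun b _ hb => by
      rw [pderiv_w m j b]
      have h1 : j ≠ b := fun h => hb h.symm
      simp [h1, hj.ne']) (by simp)]
  rw [pderiv_w m j j]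
  simp [not_lt.mpr hj.le, hj.ne', blowChart_eq]

lemma pd_m {K : Type*} [CommSemiring K] {n : ℕ} (m : Fin n)
    (p : MvPolynomial (Fin n) K) :
    pderiv m (blowChart K m p)
      = (∑ i ∈ Finset.filter (fun i => i < m) Finset.univ,
          blowChart K m (pderiv i p) * X i) + blowChart K m (pderiv m p) := by
  rw [blowChart_eq, chain_rule]
  have key : ∀ i : Fin n,
      aeval (fun i : Fin n => if i < m then (X i * X m : MvPolynomial (Fin n) K) else X i)
        (pderiv i p) * pderiv m ((fun i : Fin n => if i < m then (X i * X m :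
          MvPolynomial (Fin n) K) else X i) i)
      = (if i < m then blowChart K m (pderiv i p) * X i else 0)
        + (if i = m then blowChart K m (pderiv i p) else 0) := by
    intro i
    rw [pderiv_w m m i, ← blowChart_eq]
    rcases lt_trichotomy i m with h | h | h
    · simp [h, (ne_of_gt h : m ≠ i), h.ne]
    · subst h; simp
    · simp [not_lt.mpr h.le, (ne_of_lt h : m ≠ i), h.ne']
  rw [Finset.sum_congr rfl fun i _ => key i, Finset.sum_add_distrib, ← Finset.sum_filter,
    Finset.sum_ite_eq' Finset.univ m, if_pos (Finset.mem_univ m)]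

/-- If `I ⊆ (u_1,...,u_m)^μ`, then in the blow-up chart the controlled transform of
the derivative ideal (with weight `μ−1`) is contained in the derivative ideal of the
controlled transform: `σ^c(D(I)) ⊆ D(σ^c(I))`. -/
theorem stmt_12 {K : Type*} [Field K] [CharZero K] {n : ℕ} (m : Fin n) (μ : ℕ)
    (hμ : 1 ≤ μ) (I : Ideal (MvPolynomial (Fin n) K))
    (hI : I ≤ Ideal.span {g | ∃ i ≤ m, g = X i} ^ μ) :
    ctrans m (μ - 1) (derivIdeal I) ≤ derivIdeal (ctrans m μ I) := by
  classical
  set D := derivIdeal (ctrans m μ I) with hD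
  have hmem1 : ∀ g ∈ ctrans m μ I, g ∈ D := fun g h => Ideal.mem_sup_left h
  have hmem2 : ∀ g ∈ ctrans m μ I, ∀ i, pderiv i g ∈ D :=
    fun g h i => Ideal.mem_sup_right (Ideal.subset_span ⟨g, h, i, rfl⟩)
  have hpow : (X m : MvPolynomial (Fin n) K) ^ μ = X m ^ (μ - 1) * X m := by
    rw [← pow_succ, Nat.sub_add_cancel hμ]
  have hXne : (X m : MvPolynomial (Fin n) K) ≠ 0 := X_ne_zero m
  -- Step A : division
  have hdiv : ∀ f ∈ I, ∃ g, g ∈ ctrans m μ I ∧ blowChart K m f = X m ^ μ * g := by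
    intro f hf
    have h1 : blowChart K m f ∈ Ideal.map (blowChart K m) (Ideal.span {g | ∃ i ≤ m, g = X i} ^ μ) :=
      Ideal.mem_map_of_mem _ (hI hf)
    rw [Ideal.map_pow, Ideal.map_span] at h1
    have h2 : Ideal.span (blowChart K m '' {g | ∃ i ≤ m, g = X i})
        ≤ Ideal.span {(X m : MvPolynomial (Fin n) K)} := by
      rw [Ideal.span_le]
      rintro _ ⟨x, ⟨i, him, rfl⟩, rfl⟩
      rw [SetLike.mem_coe, Ideal.mem_span_singleton, blowChart_eq, aeval_X]
      rcases lt_or_eq_of_le him with h | h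
      · rw [if_pos h]; exact Dvd.intro_left _ rfl
      · rw [if_neg (h ▸ lt_irrefl i), h]
    have h3 := Ideal.pow_right_mono h2 μ h1
    rw [Ideal.span_singleton_pow, Ideal.mem_span_singleton] at h3
    obtain ⟨g, hg⟩ := h3
    exact ⟨g, Ideal.subset_span ⟨f, hf, hg⟩, hg⟩
  -- Derivative computations
  have hlt : ∀ f ∈ I, ∀ g, blowChart K m f = X m ^ μ * g → ∀ j, j < m →
      blowChart K m (pderiv j f) = X m ^ (μ - 1) * pderiv j g := by
    intro f hf g e j hjm
    have h1 : blowChart K m (pderiv j f) * X m = (X m ^ (μ - 1) * pderiv j g) * X m := by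
      rw [← pd_lt hjm f, e, pderiv_mul, pderiv_pow,
        pderiv_X_of_ne (ne_of_gt hjm), hpow]
      ring
    exact mul_right_cancel₀ hXne h1
  -- the auxiliary ideal S
  let S : Ideal (MvPolynomial (Fin n) K) :=
    { carrier := {f | ∃ g ∈ D, blowChart K m f = X m ^ (μ - 1) * g}
      add_mem' := by
        rintro a b ⟨g1, hg1, e1⟩ ⟨g2, hg2, e2⟩
        exact ⟨g1 + g2, D.add_mem hg1 hg2, by rw [map_add, e1, e2, mul_add]⟩
      zero_mem' := ⟨0, D.zero_mem, by simp⟩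
      smul_mem' := by
        rintro c a ⟨g, hg, e⟩
        refine ⟨blowChart K m c * g, D.mul_mem_left _ hg, ?_⟩
        rw [smul_eq_mul, map_mul, e]; ring }
  have hDS : derivIdeal I ≤ S := by
    rw [derivIdeal, sup_le_iff]
    constructor
    · intro f hf
      obtain ⟨g, hg, e⟩ := hdiv f hf
      exact ⟨X m * g, hmem1 _ ((ctrans m μ I).mul_mem_left _ hg),
        by rw [e, hpow]; ring⟩
    · rw [Ideal.span_le]
      rintro _ ⟨f, hf, j, rfl⟩
      obtain ⟨g, hg, e⟩ := hdiv f hf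
      rcases lt_trichotomy j m with hj | rfl | hj
      · exact ⟨pderiv j g, hmem2 _ hg j, hlt f hf g e j hj⟩
      · -- j = m case
        refine ⟨(μ : MvPolynomial (Fin n) K) * g + X j * pderiv j g
          - ∑ i ∈ Finset.filter (fun i => i < j) Finset.univ, X i * pderiv i g,
          ?_, ?_⟩
        · refine D.sub_mem (D.add_mem (D.mul_mem_left _ (hmem1 _ hg))
            (D.mul_mem_left _ (hmem2 _ hg j))) (Ideal.sum_mem _ fun i _ =>
            D.mul_mem_left _ (hmem2 _ hg i))
        · have h1 := pd_m j f
          rw [e] at h1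
          rw [pderiv_mul, pderiv_pow, pderiv_X_self,
            Finset.sum_congr rfl (fun i hi => by
              rw [hlt f hf g e i (Finset.mem_filter.mp hi).2])] at h1
          have h2 : blowChart K j (pderiv j f)
              = X j ^ μ * pderiv j g + (μ : MvPolynomial (Fin n) K) * X j ^ (μ - 1) * g
                - ∑ i ∈ Finset.filter (fun i => i < j) Finset.univ,
                  X j ^ (μ - 1) * pderiv i g * X i := by
            rw [eq_sub_iff_add_eq]
            linear_combination -h1
          have h3 : ∑ i ∈ Finset.filter (fun i => i < j) Finset.univ,
                X j ^ (μ - 1) * pderiv i g * X i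
              = X j ^ (μ - 1) * ∑ i ∈ Finset.filter (fun i => i < j) Finset.univ,
                  X i * pderiv i g := by
            rw [Finset.mul_sum]
            exact Finset.sum_congr rfl fun i _ => by ring
          rw [h2, h3, hpow]
          ring
      · exact ⟨X m * pderiv j g, D.mul_mem_left _ (hmem2 _ hg j), by
          rw [← pd_gt hj f, e, pderiv_mul, pderiv_pow,
            pderiv_X_of_ne (ne_of_lt hj), hpow]
          ring⟩
  -- conclude
  rw [ctrans, Ideal.span_le]
  rintro g0 ⟨f, hf, e0⟩
  obtain ⟨g', hg', e'⟩ := hDS hf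
  have : g0 = g' :=
    mul_left_cancel₀ (pow_ne_zero _ hXne) (by rw [← e0, ← e'])
  rwa [this]
end

section
/- Let I = (x^{a_1}·...·x_k^{a_k}) be a monomial ideal in K[x_1,...,x_n] (with k ≤ n) and μ a positive integer, and suppose a subset {i_1,...,i_l} ⊆ {1,...,k} satisfies a_{i_1}+...+a_{i_l} ≥ μ and, for each j, a_{i_1}+...+ǎ_{i_j}+...+a_{i_l} < μ (removing any one term drops the sum below μ). After blowing up the coordinate subspace C = {x_{i_1} = ... = x_{i_l} = 0}, in the chart corresponding to x_{i_j} the controlled transform y^{−μ}σ*(I) is the monomial ideal with the exponent a_{i_j} replaced by a = a_{i_1}+...+a_{i_l} − μ, and a < a_{i_j}; in particular the quantity (a_1+...+a_k)/μ strictly drops at every such chart point lying over C. -/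
open MvPolynomial

/-- Blow-up of a coordinate subspace for a monomial ideal: if
`I = (x^{a})` and `{i_1,...,i_l} = s` satisfies `Σ_{t∈s} a_t ≥ μ` while removing any
one index drops the sum below `μ`, then in the chart at `x_j` (for `j ∈ s`) the
controlled transform `y^{−μ}σ*(I)` is the monomial with the exponent `a_j` replaced by
`a = Σ_{t∈s} a_t − μ < a_j`; in particular the total exponent `Σ a_t` strictly drops. -/
theorem stmt_15 {K : Type*} [Field K] {n : ℕ} (a : Fin n → ℕ) (μ : ℕ) (hμ : 0 < μ)
    (s : Finset (Fin n)) (j : Fin n) (hj : j ∈ s)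
    (hsum : μ ≤ ∑ t ∈ s, a t)
    (hmin : ∀ i ∈ s, (∑ t ∈ s.erase i, a t) < μ) :
    (aeval (fun t : Fin n => if t ∈ s ∧ t ≠ j then X t * X j else X t : Fin n → MvPolynomial (Fin n) K)
          (∏ t : Fin n, X t ^ a t : MvPolynomial (Fin n) K)
        = X j ^ μ * ∏ t : Fin n, X t ^ (if t = j then (∑ t ∈ s, a t) - μ else a t))
    ∧ (∑ t ∈ s, a t) - μ < a j
    ∧ (∑ t : Fin n, (if t = j then (∑ t ∈ s, a t) - μ else a t)) < ∑ t : Fin n, a t := by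
  have hE : a j + ∑ t ∈ s.erase j, a t = ∑ t ∈ s, a t := Finset.add_sum_erase s a hj
  have hej := hmin j hj
  refine ⟨?_, by omega, ?_⟩
  · rw [map_prod]
    simp only [map_pow, aeval_X]
    have step : ∀ t ∈ Finset.univ, (if t ∈ s ∧ t ≠ j then X t * X j else X t : MvPolynomial (Fin n) K) ^ a t
        = X t ^ a t * X j ^ (if t ∈ s ∧ t ≠ j then a t else 0) := by
      intro t _
      split <;> simp [mul_pow]
    rw [Finset.prod_congr rfl step, Finset.prod_mul_distrib, Finset.prod_pow_eq_pow_sum]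
    have hsumif : (∑ t : Fin n, if t ∈ s ∧ t ≠ j then a t else 0) = ∑ t ∈ s.erase j, a t := by
      rw [← Finset.sum_filter]
      apply Finset.sum_congr _ (fun _ _ => rfl)
      ext t
      simp [Finset.mem_erase, and_comm]
    rw [hsumif]
    rw [← Finset.mul_prod_erase Finset.univ (fun t => X t ^ a t) (Finset.mem_univ j),
        ← Finset.mul_prod_erase Finset.univ
          (fun t => X t ^ (if t = j then (∑ t ∈ s, a t) - μ else a t)) (Finset.mem_univ j)]
    have hP : (∏ t ∈ Finset.univ.erase j, X t ^ (if t = j then (∑ t ∈ s, a t) - μ else a t))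
        = ∏ t ∈ Finset.univ.erase j, (X t : MvPolynomial (Fin n) K) ^ a t := by
      refine Finset.prod_congr rfl fun t ht => ?_
      rw [if_neg (Finset.mem_erase.mp ht).1]
    rw [hP, if_pos rfl]
    rw [mul_right_comm, ← pow_add, ← mul_assoc, ← pow_add,
        show a j + ∑ t ∈ s.erase j, a t = μ + ((∑ t ∈ s, a t) - μ) by omega]
  · have h1 := Finset.add_sum_erase Finset.univ (fun t => if t = j then (∑ t ∈ s, a t) - μ else a t) (Finset.mem_univ j)
    have h2 := Finset.add_sum_erase Finset.univ a (Finset.mem_univ j)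
    have hP : (∑ t ∈ Finset.univ.erase j, if t = j then (∑ t ∈ s, a t) - μ else a t)
        = ∑ t ∈ Finset.univ.erase j, a t := by
      refine Finset.sum_congr rfl fun t ht => ?_
      rw [if_neg (Finset.mem_erase.mp ht).1]
    simp only [↓reduceIte, hP] at h1
    omega
end

section
/- Let I ⊆ K[[x_1,...,x_k, y_1,...,y_{n−k}]] be an ideal with ord(I) ≥ μ at every point of the subspace S = {x = 0} lying in supp(I,μ), and consider the blow-up chart substitution x_i ↦ x'_i·y_m (for all i), y_j ↦ y'_j·y_m (j < m), y_m ↦ y_m, y_j ↦ y_j (j > m), with controlled transform f' = y_m^{−μ}·σ*(f). Writing f = Σ_α c_{α}(y)·x^α, one has f' = Σ_α c'_{α}(y')·(x')^α with c'_{α} = y_m^{−μ+|α|}·σ*(c_{α}); in particular, restriction to the strict transform S' = {x' = 0} commutes with the controlled transform: (σ^c f)|_{S'} = (σ|_{S'})^c (f|_S). -/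
/-!
On exponents the chart substitution only raises the `y_m`-exponent: the monomial `x^α y^β`
becomes `x'^α y'^β y_m^(|α| + Σ_{j<m} β_j)`. Splitting exponents of `x, y` as `α.sumElim β`,
the `x'^α`-coefficient of `σ*(f)` is therefore `y_m^|α| · (σ|_S)*(c_α)`, whatever `f` is. The
order hypothesis on `f` says exactly that every monomial of `σ*(f)` has `y_m`-degree at least
`μ`, so multiplying the controlled transform back by `y_m^μ` recovers `σ*(f)`; taking `α = 0`
gives the compatibility with restriction.
-/

/-- Writing `f ∈ K[[x_1,...,x_k,y_1,...,y_l]]` as `f = Σ_α c_α(y)·x^α`, the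
coefficient `c_α` as a power series in `y`; `coefAt 0` is the restriction to
`S = {x = 0}` (resp. to the strict transform `S' = {x' = 0}`). -/
noncomputable def coefAt {K : Type*} [CommRing K] {k l : ℕ} (α : Fin k →₀ ℕ)
    (f : MvPowerSeries (Fin k ⊕ Fin l) K) : MvPowerSeries (Fin l) K :=
  fun β => f (α.mapDomain Sum.inl + β.mapDomain Sum.inr)

/-- The blow-up chart substitution `x_i ↦ x'_i·y_m` (all `i`), `y_j ↦ y'_j·y_m`
(`j < m`), `y_m ↦ y_m`, `y_j ↦ y_j` (`j > m`), acting coefficientwise on formal power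
series. -/
noncomputable def blowSubst {K : Type*} [CommRing K] {k l : ℕ} (m : Fin l)
    (f : MvPowerSeries (Fin k ⊕ Fin l) K) : MvPowerSeries (Fin k ⊕ Fin l) K :=
  fun e =>
    let t : ℕ := (∑ i : Fin k, e (Sum.inl i)) + ∑ j ∈ Finset.univ.filter (· < m), e (Sum.inr j)
    if t ≤ e (Sum.inr m) then f (e.update (Sum.inr m) (e (Sum.inr m) - t)) else 0

/-- The induced blow-up chart substitution on the `y`-variables only:
`y_j ↦ y'_j·y_m` (`j < m`), `y_m ↦ y_m`, `y_j ↦ y_j` (`j > m`). -/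
noncomputable def blowSubstY {K : Type*} [CommRing K] {l : ℕ} (m : Fin l)
    (g : MvPowerSeries (Fin l) K) : MvPowerSeries (Fin l) K :=
  fun β =>
    let t : ℕ := ∑ j ∈ Finset.univ.filter (· < m), β j
    if t ≤ β m then g (β.update m (β m - t)) else 0


open Finsupp

namespace MvPowerSeries

variable {σ R : Type*} [CommSemiring R]

theorem coeff_X_pow_mul_eq_ite [DecidableEq σ] (i : σ) (n : ℕ) (g : MvPowerSeries σ R)
    (e : σ →₀ ℕ) :
    coeff e (X i ^ n * g) = if n ≤ e i then coeff (e - single i n) g else 0 := by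
  simp only [X_pow_eq, coeff_monomial_mul, single_le_iff, one_mul]

theorem X_pow_mul_eq_of_coeff_add_single {i : σ} {n : ℕ} {g g' : MvPowerSeries σ R}
    (hg : ∀ e, coeff e g ≠ 0 → n ≤ e i) (hg' : ∀ e, coeff e g' = coeff (e + single i n) g) :
    X i ^ n * g' = g := by
  classical
  ext e
  rw [coeff_X_pow_mul_eq_ite]
  split_ifs with h
  · rw [hg', tsub_add_cancel_of_le (single_le_iff.mpr h)]
  · exact (not_not.mp (mt (hg e) h)).symm

end MvPowerSeries

open MvPowerSeries

theorem Finset.sum_filter_lt_congr {ι M : Type*} [Fintype ι] [LinearOrder ι] [AddCommMonoid M]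
    {m : ι} {g g' : ι → M} (h : ∀ j ≠ m, g j = g' j) :
    ∑ j ∈ Finset.univ.filter (· < m), g j = ∑ j ∈ Finset.univ.filter (· < m), g' j :=
  Finset.sum_congr rfl fun j hj => h j (Finset.mem_filter.mp hj).2.ne

section Blowup

variable {K : Type*} [CommRing K] {k l : ℕ}

theorem coeff_coefAt (α : Fin k →₀ ℕ) (f : MvPowerSeries (Fin k ⊕ Fin l) K)
    (β : Fin l →₀ ℕ) : coeff β (coefAt α f) = coeff (α.sumElim β) f := by
  rw [sumElim_eq_add]; rfl

theorem sumElim_update_inr (α : Fin k →₀ ℕ) (β : Fin l →₀ ℕ) (m : Fin l) (v : ℕ) :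
    (α.sumElim β).update (Sum.inr m) v = α.sumElim (β.update m v) := by
  ext (i | j) <;> simp [Function.update_apply]

theorem sumElim_add_single_inr (α : Fin k →₀ ℕ) (β : Fin l →₀ ℕ) (m : Fin l) (n : ℕ) :
    α.sumElim β + single (Sum.inr m) n = α.sumElim (β + single m n) := by
  rw [← sumElim_zero_single, ← sumElim_add, add_zero]

theorem coeff_blowSubst_sumElim (m : Fin l) (f : MvPowerSeries (Fin k ⊕ Fin l) K)
    (α : Fin k →₀ ℕ) (β : Fin l →₀ ℕ) :
    coeff (α.sumElim β) (blowSubst m f) =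
      let t := (∑ i, α i) + ∑ j ∈ Finset.univ.filter (· < m), β j
      if t ≤ β m then coeff (α.sumElim (β.update m (β m - t))) f else 0 := by
  simp only [coeff_apply, blowSubst, sumElim_inl, sumElim_inr, ← sumElim_update_inr]
  rfl

theorem le_of_coeff_blowSubst_ne_zero {m : Fin l} {μ : ℕ} {f : MvPowerSeries (Fin k ⊕ Fin l) K}
    (hf : ∀ e : (Fin k ⊕ Fin l) →₀ ℕ, f e ≠ 0 →
      μ ≤ (∑ i : Fin k, e (Sum.inl i)) + ∑ j ∈ Finset.univ.filter (· ≤ m), e (Sum.inr j))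
    (e : (Fin k ⊕ Fin l) →₀ ℕ) (he : blowSubst m f e ≠ 0) : μ ≤ e (Sum.inr m) := by
  obtain ⟨α, β, rfl⟩ : ∃ (α : Fin k →₀ ℕ) (β : Fin l →₀ ℕ), e = α.sumElim β :=
    ⟨_, _, (comapDomain_sumElim_comapDomain e).symm⟩
  change coeff _ (blowSubst m f) ≠ 0 at he
  rw [coeff_blowSubst_sumElim] at he
  dsimp only at he
  split_ifs at he with ht
  · have hμ := hf _ he
    rw [Finset.filter_ge_eq_Iic, ← Finset.sum_Iio_add_eq_sum_Iic, ← Finset.filter_gt_eq_Iio]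
      at hμ
    simp only [sumElim_inl, sumElim_inr, coe_update, Function.update_self,
      Finset.sum_filter_lt_congr fun j hj => Function.update_of_ne hj _ β] at hμ
    rw [sumElim_inr]
    omega
  · exact absurd rfl he

theorem coeff_blowSubstY (m : Fin l) (g : MvPowerSeries (Fin l) K) (β : Fin l →₀ ℕ) :
    coeff β (blowSubstY m g) =
      let t := ∑ j ∈ Finset.univ.filter (· < m), β j
      if t ≤ β m then coeff (β.update m (β m - t)) g else 0 :=
  rfl

theorem coefAt_blowSubst (m : Fin l) (f : MvPowerSeries (Fin k ⊕ Fin l) K) (α : Fin k →₀ ℕ) :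
    coefAt α (blowSubst m f) = X m ^ (α.sum fun _ v => v) * blowSubstY m (coefAt α f) := by
  ext β
  rw [coeff_X_pow_mul_eq_ite, coeff_coefAt, coeff_blowSubst_sumElim, coeff_blowSubstY,
    sum_fintype α (fun _ v => v) fun _ => rfl]
  dsimp only
  set A := ∑ i, α i
  have hoff : ∀ j ≠ m, (β - single m A) j = β j := fun j hj => by
    rw [tsub_apply, single_eq_of_ne hj, tsub_zero]
  have hupd : ∀ v, (β - single m A).update m v = β.update m v := fun v => by
    ext j
    rcases eq_or_ne j m with rfl | hj
    · simp
    · simp [hj]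
  rw [Finset.sum_filter_lt_congr hoff, tsub_apply, single_eq_same, hupd, coeff_coefAt]
  rw [← ite_and, Nat.sub_sub]
  exact if_congr (by omega) rfl rfl

/-- The controlled transform `y_m^{-μ} σ*(f)`; it is a genuine inverse of multiplication by
`y_m^μ` only when every monomial of `σ*(f)` is divisible by `y_m^μ`. -/
noncomputable def controlledTransform (m : Fin l) (μ : ℕ) (f : MvPowerSeries (Fin k ⊕ Fin l) K) :
    MvPowerSeries (Fin k ⊕ Fin l) K :=
  fun e => blowSubst m f (e + single (Sum.inr m) μ)

theorem X_pow_mul_coefAt_controlledTransform {m : Fin l} {μ : ℕ}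
    {f : MvPowerSeries (Fin k ⊕ Fin l) K}
    (hdiv : ∀ e : (Fin k ⊕ Fin l) →₀ ℕ, blowSubst m f e ≠ 0 → μ ≤ e (Sum.inr m))
    (α : Fin k →₀ ℕ) :
    X m ^ μ * coefAt α (controlledTransform m μ f) =
      X m ^ (α.sum fun _ v => v) * blowSubstY m (coefAt α f) := by
  rw [← coefAt_blowSubst]
  refine X_pow_mul_eq_of_coeff_add_single (fun β hβ => ?_) (fun β => ?_)
  · rw [coeff_coefAt] at hβ
    exact hdiv _ hβ
  · rw [coeff_coefAt, coeff_coefAt, ← sumElim_add_single_inr]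
    rfl

end Blowup

theorem stmt_19_general {K : Type*} [Field K] {k l : ℕ} (m : Fin l) (μ : ℕ)
    (f : MvPowerSeries (Fin k ⊕ Fin l) K)
    (hf : ∀ e : (Fin k ⊕ Fin l) →₀ ℕ, f e ≠ 0 →
      μ ≤ (∑ i : Fin k, e (Sum.inl i)) + ∑ j ∈ Finset.univ.filter (· ≤ m), e (Sum.inr j)) :
    (∀ e : (Fin k ⊕ Fin l) →₀ ℕ, blowSubst m f e ≠ 0 → μ ≤ e (Sum.inr m)) ∧
    (∀ α : Fin k →₀ ℕ,
      (MvPowerSeries.X m : MvPowerSeries (Fin l) K) ^ μ *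
          coefAt α (fun e => blowSubst m f (e + Finsupp.single (Sum.inr m) μ))
        = MvPowerSeries.X m ^ (α.sum fun _ v => v) * blowSubstY m (coefAt α f)) ∧
    (MvPowerSeries.X m : MvPowerSeries (Fin l) K) ^ μ *
        coefAt (0 : Fin k →₀ ℕ) (fun e => blowSubst m f (e + Finsupp.single (Sum.inr m) μ))
      = blowSubstY m (coefAt (0 : Fin k →₀ ℕ) f) := by
  have hdiv := le_of_coeff_blowSubst_ne_zero hf
  have hcoef := X_pow_mul_coefAt_controlledTransform hdiv
  refine ⟨hdiv, hcoef, ?_⟩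
  have hrestrict := hcoef 0
  rwa [sum_zero_index, pow_zero, one_mul] at hrestrict

/-- Compatibility of coefficients and restriction with the controlled transform: if
`f` has order `≥ μ` along the center `{x = 0, y_1 = ... = y_m = 0}`, then `σ*(f)` is
divisible by `y_m^μ`; writing `f = Σ_α c_α(y)x^α` and `f' = y_m^{−μ}σ*(f) = Σ_α c'_α(y')(x')^α`,
one has `c'_α = y_m^{−μ+|α|}·σ*(c_α)`, and in particular restriction to the strict
transform `S' = {x' = 0}` commutes with the controlled transform:
`(σ^c f)|_{S'} = (σ|_{S'})^c(f|_S)`. -/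
theorem stmt_19 {K : Type*} [Field K] [CharZero K] {k l : ℕ} (m : Fin l) (μ : ℕ)
    (f : MvPowerSeries (Fin k ⊕ Fin l) K)
    (hf : ∀ e : (Fin k ⊕ Fin l) →₀ ℕ, f e ≠ 0 →
      μ ≤ (∑ i : Fin k, e (Sum.inl i)) + ∑ j ∈ Finset.univ.filter (· ≤ m), e (Sum.inr j)) :
    (∀ e : (Fin k ⊕ Fin l) →₀ ℕ, blowSubst m f e ≠ 0 → μ ≤ e (Sum.inr m)) ∧
    (∀ α : Fin k →₀ ℕ,
      (MvPowerSeries.X m : MvPowerSeries (Fin l) K) ^ μ *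
          coefAt α (fun e => blowSubst m f (e + Finsupp.single (Sum.inr m) μ))
        = MvPowerSeries.X m ^ (α.sum fun _ v => v) * blowSubstY m (coefAt α f)) ∧
    (MvPowerSeries.X m : MvPowerSeries (Fin l) K) ^ μ *
        coefAt (0 : Fin k →₀ ℕ) (fun e => blowSubst m f (e + Finsupp.single (Sum.inr m) μ))
      = blowSubstY m (coefAt (0 : Fin k →₀ ℕ) f) :=
  stmt_19_general m μ f hf
end
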